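/- arXiv:2011.08667 — 6 statements merged into one kernel-verified Lean document; each statement's English description precedes it below -/
import Mathlib

section
/- For Re(s) > N, the N-fold multiple Hurwitz zeta function satisfies ζ_N(s,x) = (1/(N-1)!) · Σ_{k=0}^{N-1} (C_{N,x}^{(k)}(0)/k!) · ζ(s-k, x), where C_{N,x}(t) = (t-x+N-1)(t-x+N-2)···(t-x+1) for N ≥ 2 (and C_{1,x}(t)=1), C_{N,x}^{(k)} denotes the k-th derivative of this polynomial, and ζ(s,x) is the Hurwitz zeta function. -/
/-!
Grouping the terms by `m = n₁ + ⋯ + nₙ`, the multiple sum becomes `∑ₘ r(m) (m + x)^(-s)`, where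
`r(m) = binom(m + N - 1, N - 1) = C_{N,x}(m + x) / (N - 1)!` counts the `n` with `∑ nᵢ = m`.
Expanding `C_{N,x}`, a polynomial of degree `N - 1`, in its Taylor series at `0` and using
`(m + x)^k (m + x)^(-s) = (m + x)^(-(s - k))` splits this into `N` Hurwitz series, each absolutely
convergent since `Re (s - k) > 1`; absolute convergence also justifies the regrouping.
-/

open Finset Polynomial
open scoped Nat

theorem Complex.summable_natCast_add_cpow_neg {x w : ℂ} (hx : 0 < x.re) (hw : 1 < w.re) :
    Summable fun n : ℕ => ((n : ℂ) + x) ^ (-w) := by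
  refine Summable.of_norm_bounded
    (((Real.summable_one_div_nat_add_rpow x.re w.re).2 hw).mul_left (Real.exp (Real.pi * |w.im|)))
    fun n => ?_
  have hre : 0 < (n + x).re := by simp only [add_re, natCast_re]; positivity
  have harg : -(arg (n + x) * (-w).im) ≤ Real.pi * |w.im| := by
    rw [neg_im, mul_neg, neg_neg]
    calc arg (n + x) * w.im ≤ |arg (n + x)| * |w.im| := by rw [← abs_mul]; exact le_abs_self _
      _ ≤ Real.pi * |w.im| := by gcongr; exact abs_arg_le_pi _
  have hnorm : ‖n + x‖ ^ (-w).re ≤ (n + x).re ^ (-w).re :=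
    Real.rpow_le_rpow_of_nonpos hre (re_le_norm _) (by rw [neg_re]; linarith)
  calc ‖(n + x) ^ (-w)‖ ≤ ‖n + x‖ ^ (-w).re / Real.exp (arg (n + x) * (-w).im) := norm_cpow_le _ _
    _ ≤ Real.exp (Real.pi * |w.im|) * (n + x).re ^ (-w).re := by
        rw [div_eq_mul_inv, ← Real.exp_neg, mul_comm]
        exact mul_le_mul (Real.exp_le_exp.2 harg) hnorm (by positivity) (by positivity)
    _ = Real.exp (Real.pi * |w.im|) * (1 / |(n : ℝ) + x.re| ^ w.re) := by
        rw [abs_of_pos (a := (n : ℝ) + x.re) (by positivity), neg_re, Real.rpow_neg hre.le, one_div,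
          add_re, natCast_re]

theorem tsum_preimage_singleton_comp {α β G : Type*} [AddCommGroup G] [TopologicalSpace G]
    [IsTopologicalAddGroup G] [T2Space G] (f : α → β) (g : β → G) (b : β) :
    ∑' a : f ⁻¹' {b}, g (f a) = Nat.card (f ⁻¹' {b}) • g b := by
  rw [← tsum_const]
  exact tsum_congr fun a => congrArg g a.2

theorem tsum_comp_eq_tsum_card_preimage_smul {α β E : Type*} [NormedAddCommGroup E]
    [CompleteSpace E] {f : α → β} (hf : ∀ b, (f ⁻¹' {b}).Finite) {g : β → E}
    (hg : Summable fun b => Nat.card (f ⁻¹' {b}) * ‖g b‖) :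
    ∑' a, g (f a) = ∑' b, Nat.card (f ⁻¹' {b}) • g b := by
  have hsum : Summable fun a => g (f a) := by
    refine Summable.of_norm ?_
    rw [← (Equiv.sigmaFiberEquiv f).summable_iff]
    refine (summable_sigma_of_nonneg fun _ => norm_nonneg _).2 ⟨fun b => ?_, ?_⟩
    · have : Finite {a // f a = b} := (hf b).to_subtype
      exact Summable.of_finite
    · refine hg.congr fun b => ?_
      rw [← nsmul_eq_mul]
      exact (tsum_preimage_singleton_comp f (fun b => ‖g b‖) b).symm
  simpa only [tsum_preimage_singleton_comp f g] using ((hsum.hasSum.tsum_fiberwise f).tsum_eq).symm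

namespace Finset.Nat

theorem preimage_sum_eq_antidiagonalTuple (k m : ℕ) :
    (fun n : Fin k → ℕ => ∑ i, n i) ⁻¹' {m} = antidiagonalTuple k m := by
  ext n
  simp [mem_antidiagonalTuple]

theorem natCard_preimage_sum (k m : ℕ) :
    Nat.card ((fun n : Fin k → ℕ => ∑ i, n i) ⁻¹' {m}) = #(antidiagonalTuple k m) := by
  rw [preimage_sum_eq_antidiagonalTuple, Nat.card_coe_set_eq, Set.ncard_coe_finset]

theorem card_antidiagonalTuple (k m : ℕ) : #(antidiagonalTuple k m) = (k + m - 1).choose m := by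
  classical
  rw [← piAntidiag_univ_fin_eq_antidiagonalTuple, ← map_sym_eq_piAntidiag, card_map, sym_univ,
    card_univ, Sym.card_sym_eq_choose, Fintype.card_fin]

theorem prod_Icc_one_add_eq_ascFactorial (m K : ℕ) :
    ∏ i ∈ Icc 1 K, (m + i) = (m + 1).ascFactorial K := by
  induction K with
  | zero => simp
  | succ K ih =>
    rw [prod_Icc_succ_top (by omega), ih, Nat.ascFactorial_succ]
    ring

theorem factorial_mul_card_antidiagonalTuple (K m : ℕ) :
    K ! * #(antidiagonalTuple (K + 1) m) = ∏ i ∈ Icc 1 K, (m + i) := by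
  rw [card_antidiagonalTuple, prod_Icc_one_add_eq_ascFactorial,
    Nat.ascFactorial_eq_factorial_mul_choose, add_right_comm, Nat.add_sub_cancel, add_comm K m,
    Nat.choose_symm_add]

theorem tsum_comp_sum_eq_tsum_card_antidiagonalTuple_mul {k : ℕ} {g : ℕ → ℂ}
    (hg : Summable fun m => (#(antidiagonalTuple k m) : ℂ) * g m) :
    ∑' n : Fin k → ℕ, g (∑ i, n i) = ∑' m, (#(antidiagonalTuple k m) : ℂ) * g m := by
  rw [tsum_comp_eq_tsum_card_preimage_smul]
  · simp only [natCard_preimage_sum, nsmul_eq_mul]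
  · intro m
    rw [preimage_sum_eq_antidiagonalTuple]
    exact finite_toSet _
  · simpa only [natCard_preimage_sum, norm_mul, Complex.norm_natCast] using hg.norm

end Finset.Nat

namespace Polynomial

theorem iterate_derivative_eval_zero {R : Type*} [CommSemiring R] (p : Polynomial R)
    (k : ℕ) : (derivative^[k] p).eval 0 = k ! * p.coeff k := by
  rw [← coeff_zero_eq_eval_zero, coeff_iterate_derivative, zero_add, Nat.descFactorial_self,
    nsmul_eq_mul]

theorem eval_eq_sum_range_iterate_derivative {K : Type*} [Field K] [CharZero K]
    {p : Polynomial K} {n : ℕ} (hp : p.natDegree < n) (y : K) :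
    p.eval y = ∑ k ∈ range n, (derivative^[k] p).eval 0 / k ! * y ^ k := by
  rw [eval_eq_sum_range' hp]
  refine sum_congr rfl fun k _ => ?_
  rw [iterate_derivative_eval_zero, mul_div_cancel_left₀ _ (by exact_mod_cast k.factorial_ne_zero)]

theorem natDegree_prod_X_add_C {ι R : Type*} [CommSemiring R] [Nontrivial R] (s : Finset ι)
    (a : ι → R) : (∏ i ∈ s, (X + C (a i))).natDegree = #s := by
  rw [natDegree_prod_of_monic _ _ fun i _ => monic_X_add_C (a i)]
  simp only [natDegree_X_add_C, sum_const, smul_eq_mul, mul_one]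

theorem eval_mul_cpow_neg_eq_sum {p : ℂ[X]} {n : ℕ} (hp : p.natDegree < n) {y : ℂ} (hy : y ≠ 0)
    (s : ℂ) :
    p.eval y * y ^ (-s) = ∑ k ∈ range n, (derivative^[k] p).eval 0 / k ! * y ^ (-(s - k)) := by
  rw [eval_eq_sum_range_iterate_derivative hp, sum_mul]
  refine sum_congr rfl fun k _ => ?_
  rw [mul_assoc, ← Complex.cpow_natCast, ← Complex.cpow_add _ _ hy]
  ring_nf

theorem eval_prod_X_add_C_sub_eq_factorial_mul_card (x : ℂ) (K m : ℕ) :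
    (∏ i ∈ Icc 1 K, (X + C ((i : ℂ) - x))).eval ((m : ℂ) + x) =
      ((K ! * #(Finset.Nat.antidiagonalTuple (K + 1) m) : ℕ) : ℂ) := by
  have hfactor : ∀ i ∈ Icc 1 K, (X + C ((i : ℂ) - x)).eval ((m : ℂ) + x) = ((m + i : ℕ) : ℂ) := by
    intro i _
    simp only [eval_add, eval_X, eval_C, Nat.cast_add]
    ring
  rw [eval_prod, prod_congr rfl hfactor, ← Nat.cast_prod,
    ← Finset.Nat.factorial_mul_card_antidiagonalTuple]

end Polynomial

-- The product over `Icc 1 K` is the polynomial `C_{K+1,x}`.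
theorem card_antidiagonalTuple_mul_cpow_eq_sum (x s : ℂ) (K m : ℕ) (hmx : (m : ℂ) + x ≠ 0) :
    (#(Finset.Nat.antidiagonalTuple (K + 1) m) : ℂ) * ((m : ℂ) + x) ^ (-s) =
      1 / K ! * ∑ k ∈ range (K + 1),
        (derivative^[k] (∏ i ∈ Icc 1 K, (X + C ((i : ℂ) - x)))).eval 0 / k ! *
          ((m : ℂ) + x) ^ (-(s - k)) := by
  have hdeg : (∏ i ∈ Icc 1 K, (X + C ((i : ℂ) - x))).natDegree < K + 1 := by
    rw [natDegree_prod_X_add_C, Nat.card_Icc]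
    omega
  rw [← eval_mul_cpow_neg_eq_sum hdeg hmx, eval_prod_X_add_C_sub_eq_factorial_mul_card,
    Nat.cast_mul, ← mul_assoc, ← mul_assoc,
    one_div_mul_cancel (Nat.cast_ne_zero.2 K.factorial_ne_zero), one_mul]

/-- Multiple Hurwitz zeta expressed via Hurwitz zeta and the polynomial `C_{N,x}`. -/
theorem multiple_hurwitz_eq_linear_combination
    (N : ℕ) (hN : 0 < N) (x : ℂ) (hx : 0 < x.re) (s : ℂ) (hs : (N : ℝ) < s.re) :
    (∑' n : Fin N → ℕ, (x + ∑ i, (n i : ℂ)) ^ (-s)) =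
      (1 / ((N - 1).factorial : ℂ)) * ∑ k ∈ Finset.range N,
        ((Polynomial.derivative^[k]
            (∏ i ∈ Finset.Icc 1 (N - 1), (Polynomial.X + Polynomial.C ((i : ℂ) - x)))).eval 0
          / ((k.factorial : ℂ))) *
          ∑' n : ℕ, ((n : ℂ) + x) ^ (-(s - (k : ℂ))) := by
  obtain ⟨K, rfl⟩ : ∃ K, N = K + 1 := ⟨N - 1, by omega⟩
  rw [Nat.add_sub_cancel]
  have hmx (m : ℕ) : (m : ℂ) + x ≠ 0 := ne_of_apply_ne Complex.re <| by
    simp only [Complex.add_re, Complex.natCast_re, Complex.zero_re]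
    positivity
  have hzeta : ∀ k ∈ range (K + 1), ∀ a : ℂ,
      Summable fun m : ℕ => a * ((m : ℂ) + x) ^ (-(s - k)) := by
    intro k hk a
    have hk : (k : ℝ) ≤ K := by exact_mod_cast Nat.lt_succ_iff.1 (mem_range.1 hk)
    refine (Complex.summable_natCast_add_cpow_neg hx ?_).mul_left a
    push_cast at hs
    simp only [Complex.sub_re, Complex.natCast_re]
    linarith
  have hterm (m : ℕ) := card_antidiagonalTuple_mul_cpow_eq_sum x s K m (hmx m)
  have hsummable : Summable fun m : ℕ =>
      (#(Finset.Nat.antidiagonalTuple (K + 1) m) : ℂ) * ((m : ℂ) + x) ^ (-s) := by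
    simp_rw [hterm]
    exact (summable_sum fun k hk => hzeta k hk _).mul_left _
  simp only [← Nat.cast_sum, add_comm x]
  rw [Finset.Nat.tsum_comp_sum_eq_tsum_card_antidiagonalTuple_mul hsummable]
  simp_rw [hterm]
  rw [tsum_mul_left, Summable.tsum_finsetSum fun k hk => hzeta k hk _]
  simp_rw [tsum_mul_left]
end

section
/- Let w_1 = r_1/q_1, …, w_N = r_N/q_N be positive rationals (r_i, q_i positive integers, not necessarily coprime). Let q be any common multiple of q_1,…,q_N, and ℓ any common multiple of the integers q·w_1,…,q·w_N. Set ℓ_i := ℓ/(q·w_i) ∈ ℤ. Then for Re(s) > N and Re(x) > 0, ζ_N(s, x | w_1,…,w_N) = (q/ℓ)^s · Σ_{k_1=0}^{ℓ_1-1} ⋯ Σ_{k_N=0}^{ℓ_N-1} ζ_N(s, (q/ℓ)(x + k_1 w_1 + ⋯ + k_N w_N)), where the right side involves the multiple Hurwitz zeta function with all periods equal to 1. -/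
/-!
Write each `n i = k i + ℓ i * m i` with `0 ≤ k i < ℓ i`. Because `ℓ i * w i = L / Q` does not
depend on `i`, the point `x + ∑ n i * w i` equals `(L / Q) * ((Q / L) * (x + ∑ k i * w i) + ∑ m i)`,
so splitting the Barnes series over the residue classes of `n` modulo `ℓ` gives the finite sum of
multiple Hurwitz zeta values. The splitting is legitimate because the series converges
absolutely for `Re s > N`: its terms are dominated by `(1 + ∑ n i) ^ (-Re s)`, and
`(1 + ∑ n i) ^ N ≥ ∏ (1 + n i)` bounds these by a product of convergent one-variable series.
-/

open Finset

theorem summable_pi_prod_of_nonneg {ι α : Type*} [Fintype ι] {f : α → ℝ} (hf₀ : 0 ≤ f)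
    (hf : Summable f) : Summable fun n : ι → α => ∏ i, f (n i) := by
  classical
  refine summable_of_sum_le (c := ∏ _i : ι, ∑' a, f a)
    (fun n => prod_nonneg fun i _ => hf₀ _) fun s => ?_
  have hs : s ⊆ Fintype.piFinset fun i => s.image (· i) := fun n hn =>
    Fintype.mem_piFinset.2 fun i => mem_image_of_mem _ hn
  calc ∑ n ∈ s, ∏ i, f (n i)
      ≤ ∑ n ∈ Fintype.piFinset (fun i => s.image (· i)), ∏ i, f (n i) :=
        sum_le_sum_of_subset_of_nonneg hs fun n _ _ => prod_nonneg fun i _ => hf₀ _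
    _ = ∏ i, ∑ a ∈ s.image (· i), f a := (prod_univ_sum _ _).symm
    _ ≤ ∏ _i : ι, ∑' a, f a :=
        prod_le_prod (fun i _ => sum_nonneg fun a _ => hf₀ a)
          fun i _ => hf.sum_le_tsum _ fun a _ => hf₀ a

theorem summable_one_add_sum_rpow_neg {ι : Type*} [Fintype ι] {σ : ℝ}
    (hσ : (Fintype.card ι : ℝ) < σ) :
    Summable fun n : ι → ℕ => (1 + ∑ i, (n i : ℝ)) ^ (-σ) := by
  cases isEmpty_or_nonempty ι
  · exact .of_finite
  have hd : (0 : ℝ) < Fintype.card ι := Nat.cast_pos.2 Fintype.card_pos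
  have hfactor : Summable fun a : ℕ => ((1 : ℝ) + a) ^ (-(σ / Fintype.card ι)) := by
    have := (Real.summable_nat_rpow.2 (by rwa [neg_lt_neg_iff, one_lt_div hd])).comp_injective
      (add_left_injective 1)
    exact this.congr fun a => by simp [add_comm]
  refine .of_nonneg_of_le (fun n => by positivity) (fun n => ?_)
    (summable_pi_prod_of_nonneg (fun a => by positivity) hfactor)
  have hprod : ∏ i, ((1 : ℝ) + n i) ≤ (1 + ∑ i, (n i : ℝ)) ^ Fintype.card ι := by
    refine (prod_le_prod (fun i _ => by positivity) fun i _ => ?_).trans_eq (prod_const _)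
    gcongr
    exact single_le_sum (fun j _ => Nat.cast_nonneg (n j)) (mem_univ i)
  calc (1 + ∑ i, (n i : ℝ)) ^ (-σ)
      = ((1 + ∑ i, (n i : ℝ)) ^ Fintype.card ι) ^ (-(σ / Fintype.card ι)) := by
        rw [← Real.rpow_natCast_mul (by positivity), mul_neg, mul_div_cancel₀ _ hd.ne']
    _ ≤ (∏ i, ((1 : ℝ) + n i)) ^ (-(σ / Fintype.card ι)) :=
        Real.rpow_le_rpow_of_nonpos (prod_pos fun i _ => by positivity) hprod
          (neg_nonpos.2 (div_nonneg (hd.trans hσ).le hd.le))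
    _ = ∏ i, ((1 : ℝ) + n i) ^ (-(σ / Fintype.card ι)) :=
        (Real.finsetProd_rpow _ _ (fun i _ => by positivity) _).symm

theorem exists_pos_le_and_forall_le {ι : Type*} [Fintype ι] {a : ℝ} {b : ι → ℝ} (ha : 0 < a)
    (hb : ∀ i, 0 < b i) : ∃ c > 0, c ≤ a ∧ ∀ i, c ≤ b i := by
  classical
  set T := insert a (univ.image b)
  refine ⟨T.min' (insert_nonempty _ _), (T.lt_min'_iff _).2 ?_, T.min'_le _ (mem_insert_self _ _),
    fun i => T.min'_le _ (mem_insert_of_mem (mem_image_of_mem _ (mem_univ i)))⟩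
  simpa [T, ha] using hb

namespace Complex

theorem ofReal_mul_cpow {a : ℝ} (ha : 0 < a) (z s : ℂ) :
    ((a : ℂ) * z) ^ s = (a : ℂ) ^ s * z ^ s := by
  rcases eq_or_ne z 0 with rfl | hz
  · rcases eq_or_ne s 0 with rfl | hs <;> simp [zero_cpow, *]
  have ha' : (a : ℂ) ≠ 0 := ofReal_ne_zero.2 ha.ne'
  rw [cpow_def_of_ne_zero (mul_ne_zero ha' hz), log_ofReal_mul ha hz, ofReal_log ha.le, add_mul,
    exp_add, ← cpow_def_of_ne_zero ha', ← cpow_def_of_ne_zero hz]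

theorem norm_cpow_neg_le_of_re_pos {z s : ℂ} (hz : 0 < z.re) (hs : 0 ≤ s.re) :
    ‖z ^ (-s)‖ ≤ Real.exp (Real.pi * |s.im|) * z.re ^ (-s.re) := by
  refine (norm_cpow_le z (-s)).trans ?_
  rw [neg_re, neg_im, div_eq_mul_inv, ← Real.exp_neg, mul_comm]
  have harg : -(z.arg * -s.im) ≤ Real.pi * |s.im| :=
    calc -(z.arg * -s.im) ≤ |z.arg| * |s.im| := by
          rw [mul_neg, neg_neg, ← abs_mul]; exact le_abs_self _
      _ ≤ Real.pi * |s.im| := by gcongr; exact abs_arg_le_pi z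
  exact mul_le_mul (Real.exp_le_exp.2 harg)
    (Real.rpow_le_rpow_of_nonpos hz (re_le_norm z) (neg_nonpos.2 hs)) (by positivity)
    (by positivity)

theorem summable_barnes {ι : Type*} [Fintype ι] {x s : ℂ} {w : ι → ℂ} (hx : 0 < x.re)
    (hw : ∀ i, 0 < (w i).re) (hs : (Fintype.card ι : ℝ) < s.re) :
    Summable fun n : ι → ℕ => (x + ∑ i, (n i : ℂ) * w i) ^ (-s) := by
  obtain ⟨c, hc0, hcx, hcw⟩ := exists_pos_le_and_forall_le hx hw
  have hs0 : 0 ≤ s.re := (Nat.cast_nonneg _).trans hs.le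
  refine .of_norm_bounded (((summable_one_add_sum_rpow_neg hs).mul_left
    (c ^ (-s.re))).mul_left (Real.exp (Real.pi * |s.im|))) fun n => ?_
  have hre : c * (1 + ∑ i, (n i : ℝ)) ≤ (x + ∑ i, (n i : ℂ) * w i).re := by
    simp only [add_re, re_sum, mul_re, natCast_re, natCast_im, zero_mul, sub_zero, mul_add,
      mul_one, mul_sum]
    refine add_le_add hcx (sum_le_sum fun i _ => ?_)
    rw [mul_comm]
    exact mul_le_mul_of_nonneg_left (hcw i) (Nat.cast_nonneg _)
  have hpos : 0 < c * (1 + ∑ i, (n i : ℝ)) := by positivity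
  refine (norm_cpow_neg_le_of_re_pos (hpos.trans_le hre) hs0).trans ?_
  rw [← Real.mul_rpow hc0.le (by positivity)]
  gcongr ?_ * ?_
  exact Real.rpow_le_rpow_of_nonpos hpos hre (neg_nonpos.2 hs0)

theorem cpow_neg_add_sum_add_mul {ι : Type*} [Fintype ι] {d : ℝ} (hd : 0 < d) {w : ι → ℂ}
    {ℓ : ι → ℕ} (hℓw : ∀ i, (ℓ i : ℂ) * w i = (d : ℂ)⁻¹) (x s : ℂ) (k m : ι → ℕ) :
    (x + ∑ i, ((k + ℓ * m) i : ℂ) * w i) ^ (-s) =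
      (d : ℂ) ^ s * ((d : ℂ) * (x + ∑ i, (k i : ℂ) * w i) + ∑ i, (m i : ℂ)) ^ (-s) := by
  have hd' : (d : ℂ) ≠ 0 := ofReal_ne_zero.2 hd.ne'
  have hsplit : x + ∑ i, ((k + ℓ * m) i : ℂ) * w i =
      (d : ℂ)⁻¹ * ((d : ℂ) * (x + ∑ i, (k i : ℂ) * w i) + ∑ i, (m i : ℂ)) := by
    simp only [Pi.add_apply, Pi.mul_apply, Nat.cast_add, Nat.cast_mul, add_mul, sum_add_distrib,
      mul_add, inv_mul_cancel_left₀ hd', mul_sum, add_assoc]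
    congr 2
    refine sum_congr rfl fun i _ => ?_
    rw [mul_right_comm, hℓw, mul_comm]
  rw [hsplit, ← ofReal_inv, ofReal_mul_cpow (inv_pos.2 hd), ofReal_inv,
    inv_cpow_ofReal_nonneg hd.le, cpow_neg, inv_inv]

end Complex

theorem bijective_piFinset_range_add_mul {ι : Type*} [Fintype ι] [DecidableEq ι] {ℓ : ι → ℕ}
    (hℓ : ∀ i, 0 < ℓ i) :
    Function.Bijective fun p : Fintype.piFinset (fun i => range (ℓ i)) × (ι → ℕ) =>
      (p.1 : ι → ℕ) + ℓ * p.2 := by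
  have hlt : ∀ (k : Fintype.piFinset fun i => range (ℓ i)) i, (k : ι → ℕ) i < ℓ i := fun k i =>
    mem_range.1 (Fintype.mem_piFinset.1 k.2 i)
  refine ⟨fun ⟨k, m⟩ ⟨k', m'⟩ h => ?_, fun n => ?_⟩
  · have h i : k.1 i + ℓ i * m i = k'.1 i + ℓ i * m' i := congrFun h i
    refine Prod.ext (Subtype.ext (funext fun i => ?_)) (funext fun i => ?_)
    · simpa [Nat.add_mul_mod_self_left, Nat.mod_eq_of_lt (hlt _ i)] using congrArg (· % ℓ i) (h i)
    · simpa [Nat.add_mul_div_left _ _ (hℓ i), Nat.div_eq_of_lt (hlt _ i)] using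
        congrArg (· / ℓ i) (h i)
  · refine ⟨(⟨fun i => n i % ℓ i, Fintype.mem_piFinset.2 fun i => mem_range.2
      (Nat.mod_lt _ (hℓ i))⟩, fun i => n i / ℓ i), funext fun i => Nat.mod_add_div _ _⟩

theorem tsum_eq_sum_tsum_add_mul {ι E : Type*} [Fintype ι] [DecidableEq ι] [AddCommGroup E]
    [UniformSpace E] [IsUniformAddGroup E] [CompleteSpace E] [T0Space E] {f : (ι → ℕ) → E}
    (hf : Summable f) {ℓ : ι → ℕ} (hℓ : ∀ i, 0 < ℓ i) :
    ∑' n, f n = ∑ k ∈ Fintype.piFinset (fun i => range (ℓ i)), ∑' m, f (k + ℓ * m) := by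
  let e := Equiv.ofBijective _ (bijective_piFinset_range_add_mul hℓ)
  rw [← e.tsum_eq]
  exact (e.summable_iff.2 hf).tsum_prod.trans
    (Finset.tsum_subtype _ fun k => ∑' m, f (k + ℓ * m))

theorem barnes_zeta_rational_periods_general
    (N : ℕ) (r q : Fin N → ℕ) (hr : ∀ i, 0 < r i) (hq : ∀ i, 0 < q i)
    (Q L : ℕ) (hQ0 : 0 < Q) (hL0 : 0 < L)
    (hQ : ∀ i, q i ∣ Q) (hL : ∀ i, (Q * r i) / q i ∣ L)
    (x : ℂ) (hx : 0 < x.re) (s : ℂ) (hs : (N : ℝ) < s.re) :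
    (∑' n : Fin N → ℕ, (x + ∑ i, (n i : ℂ) * ((r i : ℂ) / (q i : ℂ))) ^ (-s)) =
      ((Q : ℂ) / (L : ℂ)) ^ s *
        ∑ k ∈ Fintype.piFinset (fun i => Finset.range (L / ((Q * r i) / q i))),
          ∑' n : Fin N → ℕ,
            (((Q : ℂ) / (L : ℂ)) * (x + ∑ i, (k i : ℂ) * ((r i : ℂ) / (q i : ℂ)))
              + ∑ i, (n i : ℂ)) ^ (-s) := by
  have hd i : 0 < Q * r i / q i :=
    Nat.div_pos ((Nat.le_of_dvd hQ0 (hQ i)).trans (Nat.le_mul_of_pos_right Q (hr i))) (hq i)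
  have hℓ i : 0 < L / (Q * r i / q i) := Nat.div_pos (Nat.le_of_dvd hL0 (hL i)) (hd i)
  have hw i : 0 < ((r i : ℂ) / (q i : ℂ)).re := by
    rw [Complex.div_natCast_re, Complex.natCast_re]
    exact div_pos (Nat.cast_pos.2 (hr i)) (Nat.cast_pos.2 (hq i))
  have hℓw i : ((L / (Q * r i / q i) : ℕ) : ℂ) * ((r i : ℂ) / (q i : ℂ)) =
      (((Q : ℝ) / L : ℝ) : ℂ)⁻¹ := by
    rw [Nat.cast_div (hL i) (by exact_mod_cast (hd i).ne'),
      Nat.cast_div (dvd_mul_of_dvd_left (hQ i) _) (by exact_mod_cast (hq i).ne')]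
    have : (r i : ℂ) ≠ 0 := Nat.cast_ne_zero.2 (hr i).ne'
    have : (q i : ℂ) ≠ 0 := Nat.cast_ne_zero.2 (hq i).ne'
    push_cast
    field_simp
  have hQL : (((Q : ℝ) / L : ℝ) : ℂ) = (Q : ℂ) / (L : ℂ) := by push_cast; rfl
  rw [tsum_eq_sum_tsum_add_mul (Complex.summable_barnes hx hw (by simpa using hs)) hℓ, mul_sum]
  refine sum_congr rfl fun k _ => ?_
  rw [← tsum_mul_left, ← hQL]
  exact tsum_congr fun m => Complex.cpow_neg_add_sum_add_mul (by positivity) hℓw x s k m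

/-- Lemma 2.1: the Barnes zeta function with rational periods `w i = r i / q i` as a
finite sum of multiple Hurwitz zeta functions, for any common multiple `Q` of the `q i`
and any common multiple `L` of the integers `Q * w i`. -/
theorem barnes_zeta_rational_periods
    (N : ℕ) (hN : 0 < N) (r q : Fin N → ℕ) (hr : ∀ i, 0 < r i) (hq : ∀ i, 0 < q i)
    (Q L : ℕ) (hQ0 : 0 < Q) (hL0 : 0 < L)
    (hQ : ∀ i, q i ∣ Q) (hL : ∀ i, (Q * r i) / q i ∣ L)
    (x : ℂ) (hx : 0 < x.re) (s : ℂ) (hs : (N : ℝ) < s.re) :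
    (∑' n : Fin N → ℕ, (x + ∑ i, (n i : ℂ) * ((r i : ℂ) / (q i : ℂ))) ^ (-s)) =
      ((Q : ℂ) / (L : ℂ)) ^ s *
        ∑ k ∈ Fintype.piFinset (fun i => Finset.range (L / ((Q * r i) / q i))),
          ∑' n : Fin N → ℕ,
            (((Q : ℂ) / (L : ℂ)) * (x + ∑ i, (k i : ℂ) * ((r i : ℂ) / (q i : ℂ)))
              + ∑ i, (n i : ℂ)) ^ (-s) :=
  barnes_zeta_rational_periods_general N r q hr hq Q L hQ0 hL0 hQ hL x hx s hs
end

section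
/- Let w_1,…,w_N be positive rationals in lowest terms w_i = r_i/q_i, and set w := lcm(r_1,…,r_N)/gcd(q_1,…,q_N). For every prime p, ord_p(lcm(q w_1,…,q w_N) · gcd(q_1,…,q_N)) = ord_p(q · lcm(r_1,…,r_N)), where q := lcm(q_1,…,q_N); equivalently, q / lcm(q w_1,…,q w_N) = gcd(q_1,…,q_N)/lcm(r_1,…,r_N). -/
/-!
Compare `p`-adic valuations. With `α i = v_p (r i)` and `β i = v_p (q i)`, coprimality says that
`α i` and `β i` are never both positive, and `v_p (Q * r i / q i) = max β + α i - β i`. The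
maximum of these is `max β + max α - min β`: if some `α k > 0` then `β k = 0 = min β`, and
otherwise the index minimising `β` attains it.
-/

open Finset

theorem Nat.Coprime.factorization_eq_zero_or {a b : ℕ} (hab : a.Coprime b) (p : ℕ) :
    a.factorization p = 0 ∨ b.factorization p = 0 := by
  by_contra! h
  simp only [ne_eq, Nat.factorization_eq_zero_iff, not_or, not_not] at h
  obtain ⟨⟨hp, hpa, -⟩, -, hpb, -⟩ := h
  exact hp.ne_one (Nat.eq_one_of_dvd_coprimes hab hpa hpb)

theorem Nat.factorization_div_add_factorization {d n : ℕ} (hd : d ≠ 0) (hn : n ≠ 0)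
    (h : d ∣ n) (p : ℕ) : (n / d).factorization p + d.factorization p = n.factorization p := by
  rw [Nat.factorization_div h, Finsupp.tsub_apply,
    tsub_add_cancel_of_le ((Nat.factorization_le_iff_dvd hd hn).2 h p)]

theorem Finset.factorization_gcd {ι : Type*} {f : ι → ℕ} {s : Finset ι} (hs : s.Nonempty)
    (hf : ∀ k ∈ s, f k ≠ 0) (p : ℕ) :
    (s.gcd f).factorization p = s.inf' hs fun a ↦ (f a).factorization p := by
  induction hs using Finset.Nonempty.cons_induction with
  | singleton a => simp
  | cons a s ha hs ih =>
    have hgcd : s.gcd f ≠ 0 := gcd_ne_zero_iff.2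
      (hs.elim fun i hi ↦ ⟨i, hi, hf i (mem_cons_of_mem hi)⟩)
    rw [gcd_cons, gcd_eq_nat_gcd, Nat.factorization_gcd (hf a (mem_cons_self a s))
      hgcd, Finsupp.inf_apply, inf'_cons, ih fun k hk ↦ hf k (mem_cons_of_mem hk)]

/-- `c i = B + a i - b i` with `a i`, `b i` never both positive: then
`max c = B + max a - min b`, stated without truncated subtraction. -/
theorem Finset.sup_add_inf'_eq_add_sup {ι : Type*} {s : Finset ι} (hs : s.Nonempty)
    {a b c : ι → ℕ} {B : ℕ} (hc : ∀ i ∈ s, c i + b i = B + a i)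
    (hab : ∀ i ∈ s, a i = 0 ∨ b i = 0) :
    s.sup c + s.inf' hs b = B + s.sup a := by
  refine le_antisymm ?_ ?_
  · obtain ⟨i, hi, hci⟩ := exists_mem_eq_sup s hs c
    have := hc i hi
    have := inf'_le b hi
    have := le_sup (f := a) hi
    omega
  · obtain ⟨k, hk, hak⟩ := exists_mem_eq_sup s hs a
    rcases hab k hk with hak0 | hbk0
    · obtain ⟨j, hj, hbj⟩ := exists_mem_eq_inf' hs b
      have := le_sup (f := c) hj
      have := hc j hj
      omega
    · have := le_sup (f := c) hk
      have := inf'_le b hk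
      have := hc k hk
      omega

theorem Finset.lcm_lcm_mul_div_mul_gcd {ι : Type*} {s : Finset ι} (hs : s.Nonempty)
    {r q : ι → ℕ} (hr : ∀ i ∈ s, r i ≠ 0) (hq : ∀ i ∈ s, q i ≠ 0)
    (hco : ∀ i ∈ s, (r i).Coprime (q i)) :
    (s.lcm fun i ↦ s.lcm q * r i / q i) * s.gcd q = s.lcm q * s.lcm r := by
  set Q := s.lcm q
  have hQ : Q ≠ 0 := lcm_ne_zero_iff.2 hq
  have hQr : ∀ i ∈ s, Q * r i ≠ 0 := fun i hi ↦ mul_ne_zero hQ (hr i hi)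
  have hdvd : ∀ i ∈ s, q i ∣ Q * r i := fun i hi ↦ (dvd_lcm hi).mul_right _
  have hquot : ∀ i ∈ s, Q * r i / q i ≠ 0 := fun i hi ↦
    Nat.div_ne_zero_iff.2 ⟨hq i hi, Nat.le_of_dvd (Nat.pos_of_ne_zero (hQr i hi)) (hdvd i hi)⟩
  have hG : s.gcd q ≠ 0 := gcd_ne_zero_iff.2 (hs.elim fun i hi ↦ ⟨i, hi, hq i hi⟩)
  refine Nat.eq_of_factorization_eq (mul_ne_zero (lcm_ne_zero_iff.2 hquot) hG)
    (mul_ne_zero hQ (lcm_ne_zero_iff.2 hr)) fun p ↦ ?_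
  rw [Nat.factorization_mul (lcm_ne_zero_iff.2 hquot) hG, Nat.factorization_mul hQ
    (lcm_ne_zero_iff.2 hr), Finsupp.add_apply, Finsupp.add_apply, factorization_lcm hquot,
    factorization_lcm hr, factorization_gcd hs hq]
  refine sup_add_inf'_eq_add_sup hs (fun i hi ↦ ?_)
    (fun i hi ↦ (hco i hi).factorization_eq_zero_or p)
  rw [Nat.factorization_div_add_factorization (hq i hi) (hQr i hi) (hdvd i hi),
    Nat.factorization_mul hQ (hr i hi), Finsupp.add_apply]

/-- For `w i = r i / q i` in lowest terms and `Q = lcm(q)`, one has, prime by prime,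
`ord_p(lcm(Q·w) · gcd(q)) = ord_p(Q · lcm(r))`; equivalently
`Q / lcm(Q·w) = gcd(q) / lcm(r)`. -/
theorem ord_lcm_gcd_eq (N : ℕ) (hN : 0 < N) (r q : Fin N → ℕ)
    (hr : ∀ i, 0 < r i) (hq : ∀ i, 0 < q i) (hco : ∀ i, Nat.Coprime (r i) (q i)) :
    (∀ p : ℕ, p.Prime →
      padicValNat p ((Finset.univ.lcm fun i => (Finset.univ.lcm q * r i) / q i) *
          Finset.univ.gcd q)
        = padicValNat p (Finset.univ.lcm q * Finset.univ.lcm r)) ∧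
    (((Finset.univ.lcm q : ℕ) : ℚ) /
        ((Finset.univ.lcm fun i => (Finset.univ.lcm q * r i) / q i : ℕ) : ℚ))
      = ((Finset.univ.gcd q : ℕ) : ℚ) / ((Finset.univ.lcm r : ℕ) : ℚ) := by
  have key := lcm_lcm_mul_div_mul_gcd (univ_nonempty_iff.2 (Fin.pos_iff_nonempty.1 hN))
    (fun i _ ↦ (hr i).ne') (fun i _ ↦ (hq i).ne') (fun i _ ↦ hco i)
  refine ⟨fun p _ ↦ by rw [key], ?_⟩
  have hL : univ.lcm r ≠ 0 := lcm_ne_zero_iff.2 fun i _ ↦ (hr i).ne'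
  have hM : (univ.lcm fun i ↦ univ.lcm q * r i / q i) ≠ 0 := left_ne_zero_of_mul
    (key ▸ mul_ne_zero (lcm_ne_zero_iff.2 fun i _ ↦ (hq i).ne') hL)
  rw [div_eq_div_iff (Nat.cast_ne_zero.2 hM) (Nat.cast_ne_zero.2 hL)]
  exact_mod_cast key.symm.trans (mul_comm _ _)
end

section
/- Let f and g be holomorphic functions on an open set D ⊆ ℂ with f'(s) = f(s)g(s) on D. Then for every n ≥ 0, f^{(n)}(s) = f(s)·𝔹_n(g(s), g'(s), …, g^{(n-1)}(s)), where 𝔹_n is the n-th complete Bell polynomial. -/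
/-!
Differentiating `f' = f g` with Leibniz's rule gives
`f⁽ⁿ⁺¹⁾ = ∑ₖ C(n,k) f⁽ᵏ⁾ g⁽ⁿ⁻ᵏ⁾`. On the other side, the exponential generating function of
the Bell polynomials is `E = exp ∘ G` with `G = ∑_{j ≥ 1} X_j tʲ/j!`, so `E' = E G'`, and comparing
coefficients gives `𝔹_{n+1} = ∑ₖ C(n,k) 𝔹_k X_{n-k+1}`. The two recurrences match under
`X_j ↦ g⁽ʲ⁻¹⁾`, and induction on `n` concludes.
-/

open Finset PowerSeries Nat

namespace PowerSeries

variable {A : Type*} [CommRing A] [Algebra ℚ A]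

theorem derivative_exp_subst {G : A⟦X⟧} (hG : HasSubst G) :
    d⁄dX A ((exp A).subst G) = (exp A).subst G * d⁄dX A G := by
  rw [derivative_subst hG, derivative_exp]

theorem coeff_exp_subst {G : A⟦X⟧} (hG : constantCoeff G = 0) (n : ℕ) :
    coeff n ((exp A).subst G) = ∑ m ∈ range (n + 1), (m ! : ℚ)⁻¹ • coeff n (G ^ m) := by
  rw [coeff_subst' (HasSubst.of_constantCoeff_zero' hG), finsum_eq_sum_of_support_subset]
  · refine sum_congr rfl fun m _ => ?_
    rw [coeff_exp, smul_eq_mul, ← Algebra.smul_def, one_div]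
  · intro m hm
    by_contra hnm
    simp only [coe_range, Set.mem_Iio, not_lt] at hnm
    have hlt : (n : ℕ∞) < (G ^ m).order :=
      lt_of_lt_of_le (by exact_mod_cast hnm) (le_order_pow_of_constantCoeff_eq_zero m hG)
    exact hm (by simp only [coeff_of_lt_order n hlt, smul_zero])

end PowerSeries

noncomputable def bellExponent : (MvPolynomial ℕ ℚ)⟦X⟧ :=
  PowerSeries.mk fun j => if j = 0 then 0 else (j ! : ℚ)⁻¹ • MvPolynomial.X j

theorem constantCoeff_bellExponent : constantCoeff bellExponent = 0 := by
  simp [bellExponent, ← coeff_zero_eq_constantCoeff_apply]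

theorem coeff_derivative_bellExponent (j : ℕ) :
    coeff j (d⁄dX _ bellExponent) = (j ! : ℚ)⁻¹ • MvPolynomial.X (j + 1) := by
  have hfac : ((j + 1 : ℕ) : ℚ) * ((j + 1)! : ℚ)⁻¹ = (j ! : ℚ)⁻¹ := by
    rw [factorial_succ, cast_mul, mul_inv, ← mul_assoc, mul_inv_cancel₀ (by positivity), one_mul]
  rw [coeff_derivative, bellExponent, coeff_mk, if_neg j.succ_ne_zero, ← hfac,
    MvPolynomial.smul_eq_C_mul, MvPolynomial.smul_eq_C_mul, map_mul]
  push_cast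
  simp only [map_add, map_one, map_natCast]
  ring

theorem coe_trunc_bellExponent (n : ℕ) :
    (trunc (n + 1) bellExponent : (MvPolynomial ℕ ℚ)⟦X⟧) =
      ∑ j ∈ Icc 1 n, monomial j ((j ! : ℚ)⁻¹ • MvPolynomial.X j) := by
  refine PowerSeries.ext fun i => ?_
  rw [Polynomial.coeff_coe, coeff_trunc, map_sum]
  simp only [coeff_monomial, sum_ite_eq, mem_Icc, bellExponent, coeff_mk]
  split_ifs <;> first | rfl | omega

section

variable (B : ℕ → MvPolynomial ℕ ℚ)
    (hB : ∀ n : ℕ, (PowerSeries.coeff (R := MvPolynomial ℕ ℚ) n)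
        (∑ m ∈ Finset.range (n + 1), (m.factorial : ℚ)⁻¹ •
          (∑ j ∈ Finset.Icc 1 n, PowerSeries.monomial (R := MvPolynomial ℕ ℚ) j
              ((j.factorial : ℚ)⁻¹ • MvPolynomial.X j)) ^ m)
        = (n.factorial : ℚ)⁻¹ • B n)
include hB

/-- Neither the truncation of `bellExponent` to degree `n` nor the cut-off `m ≤ n` of the
exponential series in `hB` changes the coefficient of `tⁿ`. -/
theorem coeff_exp_subst_bellExponent (n : ℕ) :
    coeff n ((exp (MvPolynomial ℕ ℚ)).subst bellExponent) = (n ! : ℚ)⁻¹ • B n := by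
  rw [← hB, coeff_exp_subst constantCoeff_bellExponent, ← coe_trunc_bellExponent, map_sum]
  refine sum_congr rfl fun m _ => ?_
  rw [coeff_smul, ← coeff_coe_trunc_of_lt (lt_add_one n), ← trunc_trunc_pow,
    coeff_coe_trunc_of_lt (lt_add_one n)]

theorem bell_zero : B 0 = 1 := by
  simpa using (hB 0).symm

theorem bell_succ (n : ℕ) :
    B (n + 1) = ∑ k ∈ range (n + 1), n.choose k • (B k * MvPolynomial.X (n - k + 1)) := by
  have h := congrArg (coeff n)
    (derivative_exp_subst (HasSubst.of_constantCoeff_zero' constantCoeff_bellExponent))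
  have hlhs : coeff (n + 1) ((exp (MvPolynomial ℕ ℚ)).subst bellExponent) * (n + 1) =
      (n ! : ℚ)⁻¹ • B (n + 1) := by
    rw [coeff_exp_subst_bellExponent B hB, smul_mul_assoc, mul_comm, ← Nat.cast_succ,
      ← nsmul_eq_mul, ← Nat.cast_smul_eq_nsmul ℚ, smul_smul, factorial_succ]
    congr 1
    push_cast
    field_simp
  have hrhs : ∀ p ∈ antidiagonal n,
      coeff p.1 ((exp (MvPolynomial ℕ ℚ)).subst bellExponent) * coeff p.2 (d⁄dX _ bellExponent) =
        (n ! : ℚ)⁻¹ • (n.choose p.1 • (B p.1 * MvPolynomial.X (p.2 + 1))) := by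
    rintro ⟨i, j⟩ hij
    rw [HasAntidiagonal.mem_antidiagonal] at hij
    subst hij
    rw [coeff_exp_subst_bellExponent B hB, coeff_derivative_bellExponent, smul_mul_smul_comm,
      ← Nat.cast_smul_eq_nsmul ℚ, smul_smul, cast_add_choose]
    congr 1
    field_simp
  rw [coeff_derivative, coeff_mul, hlhs, sum_congr rfl hrhs, ← smul_sum] at h
  rw [← sum_antidiagonal_eq_sum_range_succ fun i j => n.choose i • (B i * MvPolynomial.X (j + 1))]
  exact smul_right_injective _ (by positivity) h

end

theorem iteratedDeriv_succ_eq_sum_of_deriv_eq_mul {D : Set ℂ} (hD : IsOpen D) {f g : ℂ → ℂ}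
    (hf : DifferentiableOn ℂ f D) (hg : DifferentiableOn ℂ g D)
    (hfg : ∀ s ∈ D, deriv f s = f s * g s) {s : ℂ} (hs : s ∈ D) (n : ℕ) :
    iteratedDeriv (n + 1) f s = ∑ i ∈ range (n + 1),
      n.choose i * iteratedDeriv i f s * iteratedDeriv (n - i) g s := by
  have hfg' : deriv f =ᶠ[nhds s] f * g := Filter.eventually_of_mem (hD.mem_nhds hs) hfg
  rw [iteratedDeriv_succ', hfg'.iteratedDeriv_eq, iteratedDeriv_mul
    ((hf.contDiffOn hD).contDiffAt (hD.mem_nhds hs)) ((hg.contDiffOn hD).contDiffAt (hD.mem_nhds hs))]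

theorem iteratedDeriv_eq_bell_general (B : ℕ → MvPolynomial ℕ ℚ)
    (hB : ∀ n : ℕ, (PowerSeries.coeff (R := MvPolynomial ℕ ℚ) n)
        (∑ m ∈ Finset.range (n + 1), (m.factorial : ℚ)⁻¹ •
          (∑ j ∈ Finset.Icc 1 n, PowerSeries.monomial (R := MvPolynomial ℕ ℚ) j
              ((j.factorial : ℚ)⁻¹ • MvPolynomial.X j)) ^ m)
        = (n.factorial : ℚ)⁻¹ • B n)
    (D : Set ℂ) (hD : IsOpen D) (f g : ℂ → ℂ)
    (hf : DifferentiableOn ℂ f D) (hg : DifferentiableOn ℂ g D)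
    (hfg : ∀ s ∈ D, deriv f s = f s * g s) :
    ∀ s ∈ D, ∀ n : ℕ, iteratedDeriv n f s =
      f s * MvPolynomial.aeval (fun j : ℕ => iteratedDeriv (j - 1) g s) (B n) := by
  intro s hs n
  induction n using Nat.strong_induction_on with
  | _ n ih =>
    rcases n with _ | n
    · simp [bell_zero B hB]
    rw [iteratedDeriv_succ_eq_sum_of_deriv_eq_mul hD hf hg hfg hs, bell_succ B hB, map_sum,
      mul_sum]
    refine sum_congr rfl fun k hk => ?_
    rw [ih k (mem_range.1 hk), map_nsmul, map_mul, MvPolynomial.aeval_X, Nat.add_sub_cancel,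
      nsmul_eq_mul]
    ring

/-- If `f' = f·g` on an open set `D`, then `f⁽ⁿ⁾ = f · 𝔹_n(g, g', …, g⁽ⁿ⁻¹⁾)` on `D`,
where `B n = 𝔹_n` are the complete Bell polynomials, defined by the exponential
generating function identity `exp(Σ_{j≥1} X_j t^j/j!) = Σ_n 𝔹_n t^n/n!` (expressed by
extracting the `t^n` coefficient). -/
theorem iteratedDeriv_eq_bell (B : ℕ → MvPolynomial ℕ ℚ)
    (hB0 : B 0 = 1)
    (hB : ∀ n : ℕ, (PowerSeries.coeff (R := MvPolynomial ℕ ℚ) n)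
        (∑ m ∈ Finset.range (n + 1), (m.factorial : ℚ)⁻¹ •
          (∑ j ∈ Finset.Icc 1 n, PowerSeries.monomial (R := MvPolynomial ℕ ℚ) j
              ((j.factorial : ℚ)⁻¹ • MvPolynomial.X j)) ^ m)
        = (n.factorial : ℚ)⁻¹ • B n)
    (D : Set ℂ) (hD : IsOpen D) (f g : ℂ → ℂ)
    (hf : DifferentiableOn ℂ f D) (hg : DifferentiableOn ℂ g D)
    (hfg : ∀ s ∈ D, deriv f s = f s * g s) :
    ∀ s ∈ D, ∀ n : ℕ, iteratedDeriv n f s =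
      f s * MvPolynomial.aeval (fun j : ℕ => iteratedDeriv (j - 1) g s) (B n) :=
  iteratedDeriv_eq_bell_general B hB D hD f g hf hg hfg
end

section
/- For integers u, v with 1 ≤ u < v, ζ(0, u/v) = (1/(πv)) Σ_{k=1}^{v} γ_0(k/v) sin(2πku/v), where γ_0(x) = -ψ(x) is the zeroth generalized Stieltjes constant (the constant term in the Laurent expansion of ζ(s,x) at s = 1); for u = v, ζ(0, 1) = -1/2. -/
/-!
For `0 < u < v` the point `a = u/v` is not an integer, so the even part of `ζ(s, a)` vanishes
at `s = 0` and the functional equation of the odd part at `s = 1` gives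
`ζ(0, a) = sinZeta(a, 1) / π`. Splitting `sin` into additive characters of `ZMod v`,
`v ^ s · sinZeta(a, s) = Σ_k sin(2πku/v) ζ(s, k/v)`; since `Σ_k sin(2πku/v) = 0`, the right
side does not change when `1/(s - 1)` is subtracted from every `ζ(s, k/v)`, and letting `s → 1`
turns each `ζ(s, k/v) - 1/(s - 1)` into `γ₀(k/v)`. For `u = v`, `ζ(0, 1) = ζ(0) = -1/2`.
-/

open Complex HurwitzZeta

lemma eqOn_compl_one_of_one_lt_re {f g : ℂ → ℂ} (hf : DifferentiableOn ℂ f {1}ᶜ)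
    (hg : DifferentiableOn ℂ g {1}ᶜ) (h : ∀ s : ℂ, 1 < s.re → f s = g s) :
    Set.EqOn f g {1}ᶜ := by
  have hU : IsOpen ({1}ᶜ : Set ℂ) := isOpen_compl_singleton
  refine (hf.analyticOnNhd hU).eqOn_of_preconnected_of_eventuallyEq (hg.analyticOnNhd hU)
    (isConnected_compl_singleton_of_one_lt_rank (by simp) _).isPreconnected
    (by norm_num : (2 : ℂ) ∈ ({1}ᶜ : Set ℂ)) ?_
  filter_upwards [(continuous_re.isOpen_preimage _ isOpen_Ioi).mem_nhds
    (by norm_num : (2 : ℂ) ∈ re ⁻¹' Set.Ioi 1)] with z hz using h z hz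

lemma eqOn_hurwitzZeta_of_eq_tsum {a : ℝ} (ha : a ∈ Set.Icc 0 1) {f : ℂ → ℂ}
    (hf : DifferentiableOn ℂ f {1}ᶜ)
    (hfa : ∀ s : ℂ, 1 < s.re → f s = ∑' n : ℕ, ((n : ℂ) + a) ^ (-s)) :
    Set.EqOn f (hurwitzZeta a) {1}ᶜ := by
  refine eqOn_compl_one_of_one_lt_re hf
    (fun s hs ↦ (differentiableAt_hurwitzZeta a hs).differentiableWithinAt) fun s hs ↦ ?_
  simp_rw [hfa s hs, ← (hasSum_hurwitzZeta_of_one_lt_re ha hs).tsum_eq, cpow_neg, one_div]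

lemma eqOn_hurwitzZeta_sub_of_eq_tsum {a : ℝ} (ha : a ∈ Set.Icc 0 1) {g : ℂ → ℂ}
    (hg : Differentiable ℂ g)
    (hga : ∀ s : ℂ, 1 < s.re → g s = (∑' n : ℕ, ((n : ℂ) + a) ^ (-s)) - 1 / (s - 1)) :
    Set.EqOn g (fun s ↦ hurwitzZeta a s - 1 / (s - 1)) {1}ᶜ := by
  intro s hs
  have hpole : DifferentiableOn ℂ (fun s : ℂ ↦ 1 / (s - 1)) {1}ᶜ :=
    (differentiableOn_const 1).div (differentiableOn_id.sub_const 1) fun s hs ↦ sub_ne_zero.mpr hs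
  exact eq_sub_of_add_eq <| eqOn_hurwitzZeta_of_eq_tsum (f := fun s ↦ g s + 1 / (s - 1)) ha
    (hg.differentiableOn.add hpole) (fun s hs ↦ by simp [hga s hs]) hs

lemma hurwitzZetaOdd_zero (a : UnitAddCircle) : hurwitzZetaOdd a 0 = sinZeta a 1 / Real.pi := by
  have h := hurwitzZetaOdd_one_sub a (s := 1) fun n ↦ by
    rw [ne_eq, ← ofReal_natCast, ← ofReal_neg, ← ofReal_one, ofReal_inj]
    linarith [n.cast_nonneg (α := ℝ)]
  have hsin : sin (Real.pi * 1 / 2) = 1 := by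
    rw [mul_one, ← ofReal_ofNat, ← ofReal_div, ← ofReal_sin, Real.sin_pi_div_two, ofReal_one]
  rw [sub_self, Gamma_one, cpow_neg_one, hsin] at h
  rw [h]
  field_simp

lemma hurwitzZeta_zero_of_ne_zero {a : UnitAddCircle} (ha : a ≠ 0) :
    hurwitzZeta a 0 = sinZeta a 1 / Real.pi := by
  rw [hurwitzZeta, hurwitzZetaEven_apply_zero, if_neg ha, zero_add, hurwitzZetaOdd_zero]

namespace ZMod

variable {N : ℕ} [NeZero N]

noncomputable def stdSin (a j : ZMod N) : ℂ :=
  (stdAddChar (a * j) - stdAddChar (-a * j)) / (2 * I)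

lemma stdSin_natCast (u k : ℕ) :
    stdSin (u : ZMod N) (k : ZMod N) = Real.sin (2 * Real.pi * k * u / N) := by
  have hchar (m : ℤ) :
      stdAddChar ((m : ZMod N) * (k : ZMod N)) = exp (↑(2 * Real.pi * m * k / N) * I) := by
    rw [← Int.cast_natCast k, ← Int.cast_mul, stdAddChar_coe]
    push_cast
    ring_nf
  have hpos : ((2 * Real.pi * (u : ℤ) * k / N : ℝ) : ℂ) = ↑(2 * Real.pi * k * u / N) := by
    push_cast; ring
  have hneg : ((2 * Real.pi * (-u : ℤ) * k / N : ℝ) : ℂ) = -↑(2 * Real.pi * k * u / N) := by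
    push_cast; ring
  rw [stdSin, ← Int.cast_natCast u, ← Int.cast_neg, hchar, hchar, hpos, hneg, exp_mul_I,
    exp_mul_I, cos_neg, sin_neg, ofReal_sin]
  field_simp
  ring

lemma sum_stdSin (a : ZMod N) : ∑ j, stdSin a j = 0 := by
  have hneg : ∑ j, stdAddChar (-a * j) = ∑ j, stdAddChar (a * j) :=
    Fintype.sum_equiv (Equiv.neg _) _ _ fun j ↦ by simp
  simp only [stdSin, ← Finset.sum_div, Finset.sum_sub_distrib, hneg, sub_self, zero_div]

lemma sum_stdAddChar_mul_hurwitzZeta (a : ZMod N) {s : ℂ} (h : a ≠ 0 ∨ s ≠ 1) :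
    ∑ j, stdAddChar (a * j) * hurwitzZeta (toAddCircle j) s =
      N ^ s * expZeta (toAddCircle a) s := by
  rw [← LFunction_stdAddChar_eq_expZeta a s h, LFunction, ← mul_assoc,
    ← cpow_add _ _ (Nat.cast_ne_zero.mpr (NeZero.ne N)), add_neg_cancel, cpow_zero, one_mul]

lemma sum_stdSin_mul_hurwitzZeta (a : ZMod N) {s : ℂ} (h : a ≠ 0 ∨ s ≠ 1) :
    ∑ j, stdSin a j * hurwitzZeta (toAddCircle j) s = N ^ s * sinZeta (toAddCircle a) s := by
  have hneg := sum_stdAddChar_mul_hurwitzZeta (-a) (by rwa [neg_ne_zero])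
  rw [sinZeta_eq, ← map_neg, mul_div_assoc', mul_sub, ← sum_stdAddChar_mul_hurwitzZeta a h,
    ← hneg, ← Finset.sum_sub_distrib, Finset.sum_div]
  simp only [stdSin, div_mul_eq_mul_div, sub_mul]

lemma sum_Icc_natCast {M : Type*} [AddCommMonoid M] (g : ZMod N → M) :
    ∑ k ∈ Finset.Icc 1 N, g k = ∑ j, g j := by
  refine Finset.sum_nbij' (fun k ↦ (k : ZMod N)) (fun j ↦ (j - 1).val + 1) (by simp)
    (fun j _ ↦ by simp [Nat.succ_le_of_lt (val_lt _)]) (fun k hk ↦ ?_) (fun j _ ↦ by simp)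
    fun _ _ ↦ rfl
  obtain ⟨m, rfl⟩ : ∃ m, k = m + 1 := ⟨k - 1, by grind⟩
  simp [val_natCast_of_lt (by grind : m < N)]

end ZMod

open ZMod in
lemma sum_Icc_hurwitzZeta_sub_mul_sin (N u : ℕ) [NeZero N] {s : ℂ} (hs : s ≠ 1) :
    ∑ k ∈ Finset.Icc 1 N,
        (hurwitzZeta (k / N : ℝ) s - 1 / (s - 1)) * Real.sin (2 * Real.pi * k * u / N) =
      N ^ s * sinZeta (u / N : ℝ) s := by
  have hterm (k : ℕ) :
      (hurwitzZeta (k / N : ℝ) s - 1 / (s - 1)) * Real.sin (2 * Real.pi * k * u / N) =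
        stdSin (u : ZMod N) k * hurwitzZeta (toAddCircle (k : ZMod N)) s -
          stdSin (u : ZMod N) k / (s - 1) := by
    rw [stdSin_natCast, toAddCircle_natCast]
    ring
  rw [Finset.sum_congr rfl fun k _ ↦ hterm k, sum_Icc_natCast (fun j ↦ stdSin (u : ZMod N) j *
      hurwitzZeta (toAddCircle j) s - stdSin (u : ZMod N) j / (s - 1)),
    Finset.sum_sub_distrib, ← Finset.sum_div, sum_stdSin, zero_div, sub_zero,
    sum_stdSin_mul_hurwitzZeta _ (Or.inr hs), toAddCircle_natCast]

lemma sum_Icc_mul_sin_eq_mul_sinZeta_one (N u : ℕ) [NeZero N] {G : ℕ → ℂ → ℂ}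
    (hG : ∀ k, Continuous (G k))
    (hGζ : ∀ k ∈ Finset.Icc 1 N,
      Set.EqOn (G k) (fun s ↦ hurwitzZeta (k / N : ℝ) s - 1 / (s - 1)) {1}ᶜ) :
    ∑ k ∈ Finset.Icc 1 N, G k 1 * Real.sin (2 * Real.pi * k * u / N) =
      N * sinZeta (u / N : ℝ) 1 := by
  have hlhs : Continuous fun s ↦
      ∑ k ∈ Finset.Icc 1 N, G k s * ((Real.sin (2 * Real.pi * k * u / N) : ℝ) : ℂ) :=
    continuous_finsetSum _ fun k _ ↦ (hG k).mul continuous_const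
  have hrhs : Continuous fun s ↦ (N : ℂ) ^ s * sinZeta (u / N : ℝ) s :=
    (continuous_const_cpow (N : ℂ)).mul (differentiableAt_sinZeta _).continuous
  have hext := hlhs.ext_on (dense_compl_singleton 1) hrhs fun s hs ↦ by
    rw [← sum_Icc_hurwitzZeta_sub_mul_sin N u hs]
    exact Finset.sum_congr rfl fun k hk ↦ by rw [hGζ k hk hs]
  simpa using congrFun hext 1

/-- Values at `s = 0` of the (analytically continued) Hurwitz zeta function `ζ(s, u/v)`:
for `u < v`, `ζ(0, u/v) = (1/(πv)) Σ_{k=1}^v γ₀(k/v) sin(2πku/v)`, where `γ₀(k/v) = G k 1`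
is the constant term of the Laurent expansion of `ζ(s, k/v)` at `s = 1`; for `u = v`,
`ζ(0,1) = -1/2`.  Here `F` is the analytic continuation of `ζ(s, u/v)` and `G k` the entire
continuation of `ζ(s, k/v) - 1/(s-1)`. -/
theorem hurwitzZeta_zero_value (u v : ℕ) (hu : 1 ≤ u) (huv : u ≤ v)
    (F : ℂ → ℂ) (hF : DifferentiableOn ℂ F {(1 : ℂ)}ᶜ)
    (hFeq : ∀ s : ℂ, 1 < s.re → F s = ∑' n : ℕ, ((n : ℂ) + (u : ℂ) / (v : ℂ)) ^ (-s))
    (G : ℕ → ℂ → ℂ) (hG : ∀ k, Differentiable ℂ (G k))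
    (hGeq : ∀ k, 1 ≤ k → k ≤ v → ∀ s : ℂ, 1 < s.re →
      G k s = (∑' n : ℕ, ((n : ℂ) + (k : ℂ) / (v : ℂ)) ^ (-s)) - 1 / (s - 1)) :
    (u < v → F 0 = 1 / ((Real.pi : ℂ) * (v : ℂ)) *
        ∑ k ∈ Finset.Icc 1 v, G k 1 * ((Real.sin (2 * Real.pi * k * u / v) : ℝ) : ℂ)) ∧
    (u = v → F 0 = -(1 / 2)) := by
  have : NeZero v := ⟨by omega⟩
  have hmem {k : ℕ} (hk : k ≤ v) : (k / v : ℝ) ∈ Set.Icc 0 1 :=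
    ⟨by positivity, div_le_one_of_le₀ (by exact_mod_cast hk) (by positivity)⟩
  have hF0 : F 0 = hurwitzZeta (u / v : ℝ) 0 :=
    eqOn_hurwitzZeta_of_eq_tsum (hmem huv) hF (by push_cast; exact hFeq) zero_ne_one
  refine ⟨fun hlt ↦ ?_, fun huv ↦ ?_⟩
  · have hA : ((u / v : ℝ) : UnitAddCircle) ≠ 0 := by
      rw [← ZMod.toAddCircle_natCast, ne_eq, ZMod.toAddCircle_eq_zero,
        ZMod.natCast_eq_zero_iff]
      exact Nat.not_dvd_of_pos_of_lt (by omega) hlt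
    have hGζ (k : ℕ) (hk : k ∈ Finset.Icc 1 v) :
        Set.EqOn (G k) (fun s ↦ hurwitzZeta (k / v : ℝ) s - 1 / (s - 1)) {1}ᶜ := by
      rw [Finset.mem_Icc] at hk
      exact eqOn_hurwitzZeta_sub_of_eq_tsum (hmem hk.2) (hG k)
        (by push_cast; exact hGeq k hk.1 hk.2)
    rw [hF0, hurwitzZeta_zero_of_ne_zero hA,
      sum_Icc_mul_sin_eq_mul_sinZeta_one v u (fun k ↦ (hG k).continuous) hGζ]
    field_simp [NeZero.ne v]
  · subst huv
    rw [hF0, div_self (by positivity), AddCircle.coe_period, hurwitzZeta_zero, riemannZeta_zero]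
    norm_num
end

section
/- For a real x with 0 < x ≤ 1 and integer n ≥ 0, the generalized Stieltjes constant γ_n(x) (the coefficient in ζ(s,x) = 1/(s-1) + Σ_{n≥0}((-1)^n/n!)γ_n(x)(s-1)^n) satisfies γ_n(x) = lim_{m→∞} ( Σ_{k=0}^{m} (log^n(k+x))/(k+x) − log^{n+1}(m+x)/(n+1) ). -/
/-!
Put `D_m(s) = ∑_{k ≤ m} (k + x)^{-s} - ∫_1^{m+x} t^{-s} dt`. Each `D_m` is entire, and
`D_{m+1}(s) - D_m(s)` is the error of the right-endpoint rule for `∫_{m+x}^{m+x+1} t^{-s} dt`,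
which is `O(|s| (m + x)^{-Re s - 1})` by the mean value theorem. Hence `D_m` converges locally
uniformly on `Re s > 0`; for `Re s > 1` the limit is `ζ(s, x) - 1/(s - 1)`, so by the identity
theorem it is `F` on the whole half-plane. By Weierstrass, `D_m^{(n)}(1) → F^{(n)}(1)`, and
differentiating under the sum and the integral, `(-1)^n D_m^{(n)}(1)` is the `m`-th term of the
sequence in the statement.
-/

open Filter Topology Set

theorem TendstoLocallyUniformlyOn.iteratedDeriv {ι : Type*} {φ : Filter ι} {U : Set ℂ}
    {f : ι → ℂ → ℂ} {g : ℂ → ℂ} (hfg : TendstoLocallyUniformlyOn f g φ U)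
    (hf : ∀ᶠ i in φ, DifferentiableOn ℂ (f i) U) (hU : IsOpen U) (n : ℕ) :
    TendstoLocallyUniformlyOn (fun i => iteratedDeriv n (f i)) (iteratedDeriv n g) φ U := by
  induction n generalizing f g with
  | zero => simpa using hfg
  | succ n ih =>
    simp only [iteratedDeriv_succ']
    refine ih (hfg.deriv hf hU) ?_
    filter_upwards [hf] with i hi
    exact (hi.analyticOnNhd hU).deriv.differentiableOn

lemma Real.abs_log_le_max_of_mem_uIcc {a b t : ℝ} (ha : 0 < a) (hb : 0 < b)
    (ht : t ∈ uIcc a b) : |Real.log t| ≤ max |Real.log a| |Real.log b| := by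
  have h0 : 0 < min a b := lt_min ha hb
  have := abs_le_max_abs_abs (Real.log_le_log h0 ht.1) (Real.log_le_log (h0.trans_le ht.1) ht.2)
  rcases le_total a b with hab | hab
  · simpa [hab] using this
  · simpa [hab, max_comm] using this

lemma Real.integral_log_pow_div {M : ℝ} (hM : 0 < M) (n : ℕ) :
    ∫ t in (1 : ℝ)..M, Real.log t ^ n / t = Real.log M ^ (n + 1) / (n + 1) := by
  have hpos : ∀ t ∈ uIcc 1 M, 0 < t := fun t ht => (lt_min one_pos hM).trans_le ht.1
  have h := intervalIntegral.integral_comp_mul_deriv (g := fun u => u ^ n)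
    (fun t ht => Real.hasDerivAt_log (hpos t ht).ne')
    (continuousOn_inv₀.mono fun t ht => (hpos t ht).ne') (continuous_pow n)
  simp only [Function.comp_def, Real.log_one, integral_pow] at h
  simp only [div_eq_mul_inv, h]
  simp

lemma tendsto_ofReal_cpow_atTop_zero {s : ℂ} (hs : s.re < 0) :
    Tendsto (fun t : ℝ => (t : ℂ) ^ s) atTop (𝓝 0) := by
  rw [tendsto_zero_iff_norm_tendsto_zero]
  refine (tendsto_rpow_neg_atTop (neg_pos.2 hs)).congr' ?_
  filter_upwards [eventually_gt_atTop 0] with t ht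
  rw [neg_neg, Complex.norm_cpow_eq_rpow_re_of_pos ht]

lemma summable_natCast_add_cpow_neg {x : ℝ} (hx : 0 < x) {s : ℂ} (hs : 1 < s.re) :
    Summable fun k : ℕ => ((k : ℂ) + x) ^ (-s) := by
  refine .of_norm (((Real.summable_one_div_nat_add_rpow x s.re).2 hs).congr fun k => ?_)
  have hkx : (0 : ℝ) < k + x := by positivity
  rw [show (k : ℂ) + x = ((k + x : ℝ) : ℂ) by push_cast; rfl,
    Complex.norm_cpow_eq_rpow_re_of_pos hkx, abs_of_pos hkx, Complex.neg_re,
    Real.rpow_neg hkx.le, one_div]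

lemma integral_one_ofReal_cpow_neg {M : ℝ} (hM : 0 < M) {s : ℂ} (hs : s ≠ 1) :
    ∫ t in (1 : ℝ)..M, (t : ℂ) ^ (-s) = ((M : ℂ) ^ (1 - s) - 1) / (1 - s) := by
  have hs' : -s ≠ -1 := fun h => hs (neg_injective h)
  rw [integral_cpow (Or.inr ⟨hs', fun h => (lt_min one_pos hM).not_ge h.1⟩)]
  simp [neg_add_eq_sub]

noncomputable def cpowNegRightRuleError (c : ℝ) (s : ℂ) : ℂ :=
  ((c + 1 : ℝ) : ℂ) ^ (-s) - ∫ t in c..c + 1, (t : ℂ) ^ (-s)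

lemma hasDerivAt_ofReal_cpow_neg {t : ℝ} (ht : 0 < t) (s : ℂ) :
    HasDerivAt (fun t : ℝ => (t : ℂ) ^ (-s)) (-s * (t : ℂ) ^ (-s - 1)) t := by
  simpa using ((hasDerivAt_id (t : ℂ)).cpow_const (c := -s)
    (Complex.ofReal_mem_slitPlane.2 ht)).comp_ofReal

lemma norm_cpowNegRightRuleError_le {c : ℝ} (hc : 0 < c) {s : ℂ} (hs : -1 ≤ s.re) :
    ‖cpowNegRightRuleError c s‖ ≤ ‖s‖ / c ^ (s.re + 1) := by
  have hpos : ∀ t ∈ Icc c (c + 1), 0 < t := fun t ht => hc.trans_le ht.1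
  have hderiv : ∀ t ∈ Icc c (c + 1), ‖-s * (t : ℂ) ^ (-s - 1)‖ ≤ ‖s‖ / c ^ (s.re + 1) := by
    intro t ht
    have hre : (-s - 1).re = -(s.re + 1) := by
      simp only [Complex.sub_re, Complex.neg_re, Complex.one_re]; ring
    rw [norm_mul, norm_neg, Complex.norm_cpow_eq_rpow_re_of_pos (hpos t ht), hre, div_eq_mul_inv,
      ← Real.rpow_neg hc.le]
    exact mul_le_mul_of_nonneg_left (Real.rpow_le_rpow_of_nonpos hc ht.1 (by linarith))
      (norm_nonneg s)
  have hmvt : ∀ t ∈ Icc c (c + 1),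
      ‖((c + 1 : ℝ) : ℂ) ^ (-s) - (t : ℂ) ^ (-s)‖ ≤ ‖s‖ / c ^ (s.re + 1) := by
    intro t ht
    have := (convex_Icc c (c + 1)).norm_image_sub_le_of_norm_hasDerivWithin_le
      (fun τ hτ => (hasDerivAt_ofReal_cpow_neg (hpos τ hτ) s).hasDerivWithinAt) hderiv ht
      (right_mem_Icc.2 (by linarith))
    refine this.trans (mul_le_of_le_one_right (by positivity) ?_)
    rw [Real.norm_eq_abs, abs_le]
    constructor <;> linarith [ht.1, ht.2]
  have hconst : ((c + 1 : ℝ) : ℂ) ^ (-s) = ∫ _ in c..c + 1, ((c + 1 : ℝ) : ℂ) ^ (-s) := by simp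
  rw [cpowNegRightRuleError, hconst, ← intervalIntegral.integral_sub intervalIntegrable_const
    (intervalIntegral.intervalIntegrable_cpow (Or.inr fun h => ?_))]
  · refine (intervalIntegral.norm_integral_le_of_norm_le_const fun t ht => hmvt t ?_).trans ?_
    · rw [uIoc_of_le (by linarith)] at ht
      exact ⟨ht.1.le, ht.2⟩
    · simp
  · rw [uIcc_of_le (by linarith)] at h
    linarith [h.1]

noncomputable def iterDerivCpowNeg (n : ℕ) (t : ℝ) (s : ℂ) : ℂ :=
  (-(Real.log t : ℂ)) ^ n * (t : ℂ) ^ (-s)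

namespace iterDerivCpowNeg

@[simp] lemma zero (t : ℝ) (s : ℂ) : iterDerivCpowNeg 0 t s = (t : ℂ) ^ (-s) := by
  simp [iterDerivCpowNeg]

lemma one (t : ℝ) (n : ℕ) :
    iterDerivCpowNeg n t 1 = (-1) ^ n * ((Real.log t ^ n / t : ℝ) : ℂ) := by
  rw [iterDerivCpowNeg, Complex.cpow_neg_one, neg_pow]
  push_cast
  ring

lemma hasDerivAt {t : ℝ} (ht : 0 < t) (n : ℕ) (s : ℂ) :
    HasDerivAt (iterDerivCpowNeg n t) (iterDerivCpowNeg (n + 1) t s) s := by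
  have h := ((hasDerivAt_neg s).const_cpow (c := (t : ℂ))
    (Or.inl (Complex.ofReal_ne_zero.2 ht.ne'))).const_mul ((-(Real.log t : ℂ)) ^ n)
  rw [← Complex.ofReal_log ht.le] at h
  exact h.congr_deriv (by simp only [iterDerivCpowNeg]; ring)

lemma norm_le {t : ℝ} (ht : 0 < t) (n : ℕ) (s : ℂ) :
    ‖iterDerivCpowNeg n t s‖ ≤ |Real.log t| ^ n * Real.exp (|Real.log t| * ‖s‖) := by
  rw [iterDerivCpowNeg, norm_mul, norm_pow, norm_neg, Complex.norm_real, Real.norm_eq_abs,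
    Complex.norm_cpow_eq_rpow_re_of_pos ht, Real.rpow_def_of_pos ht]
  refine mul_le_mul_of_nonneg_left (Real.exp_le_exp.2 ?_) (by positivity)
  calc Real.log t * (-s).re ≤ |Real.log t * (-s).re| := le_abs_self _
    _ ≤ |Real.log t| * ‖s‖ := by
      rw [abs_mul, Complex.neg_re, abs_neg]
      exact mul_le_mul_of_nonneg_left (Complex.abs_re_le_norm s) (abs_nonneg _)

lemma continuousOn (n : ℕ) (s : ℂ) : ContinuousOn (iterDerivCpowNeg n · s) (Ioi 0) := by
  intro t ht
  apply ContinuousAt.continuousWithinAt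
  have hlog : ContinuousAt (fun t : ℝ => (Real.log t : ℂ)) t :=
    Complex.continuous_ofReal.continuousAt.comp (Real.continuousAt_log (ne_of_gt ht))
  exact (hlog.neg.pow n).mul (Complex.continuousAt_ofReal_cpow_const _ _ (Or.inr (ne_of_gt ht)))

lemma hasDerivAt_integral (n : ℕ) {a b : ℝ} (ha : 0 < a) (hb : 0 < b) (s₀ : ℂ) :
    HasDerivAt (fun s => ∫ t in a..b, iterDerivCpowNeg n t s)
      (∫ t in a..b, iterDerivCpowNeg (n + 1) t s₀) s₀ := by
  set B := max |Real.log a| |Real.log b|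
  have hpos : ∀ t ∈ uIoc a b, 0 < t := fun t ht => (lt_min ha hb).trans ht.1
  have hmeas : ∀ k s, MeasureTheory.AEStronglyMeasurable (iterDerivCpowNeg k · s)
      (MeasureTheory.volume.restrict (uIoc a b)) := fun k s =>
    ((continuousOn k s).mono hpos).aestronglyMeasurable measurableSet_uIoc
  refine (intervalIntegral.hasDerivAt_integral_of_dominated_loc_of_deriv_le
    (bound := fun _ => B ^ (n + 1) * Real.exp (B * (‖s₀‖ + 1)))
    (Metric.ball_mem_nhds s₀ one_pos) (Eventually.of_forall (hmeas n))
    ((continuousOn n s₀).mono fun _ ht => (lt_min ha hb).trans_le ht.1).intervalIntegrable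
    (hmeas (n + 1) s₀)
    (MeasureTheory.ae_of_all _ fun t ht s hs => ?_) intervalIntegrable_const
    (MeasureTheory.ae_of_all _ fun t ht s _ => hasDerivAt (hpos t ht) n s)).2
  have hB : |Real.log t| ≤ B := Real.abs_log_le_max_of_mem_uIcc ha hb (uIoc_subset_uIcc ht)
  have hs' : ‖s‖ ≤ ‖s₀‖ + 1 := norm_le_norm_add_const_of_dist_le (Metric.mem_ball.1 hs).le
  refine (norm_le (hpos t ht) (n + 1) s).trans ?_
  gcongr

end iterDerivCpowNeg

/-- `D_m^{(n)}(s)` in the notation of the module docstring. -/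
noncomputable def hurwitzTrunc (x : ℝ) (n m : ℕ) (s : ℂ) : ℂ :=
  ∑ k ∈ Finset.range (m + 1), iterDerivCpowNeg n (k + x) s -
    ∫ t in (1 : ℝ)..(m + x), iterDerivCpowNeg n t s

noncomputable def hurwitzTruncLimit (x : ℝ) (s : ℂ) : ℂ :=
  hurwitzTrunc x 0 0 s + ∑' k : ℕ, cpowNegRightRuleError (k + x) s

section

variable {x : ℝ}

lemma hasDerivAt_hurwitzTrunc (hx : 0 < x) (n m : ℕ) (s : ℂ) :
    HasDerivAt (hurwitzTrunc x n m) (hurwitzTrunc x (n + 1) m s) s :=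
  (HasDerivAt.fun_sum fun k _ => iterDerivCpowNeg.hasDerivAt (by positivity) n s).sub
    (iterDerivCpowNeg.hasDerivAt_integral n one_pos (by positivity) s)

lemma iteratedDeriv_hurwitzTrunc (hx : 0 < x) (n m : ℕ) :
    iteratedDeriv n (hurwitzTrunc x 0 m) = hurwitzTrunc x n m := by
  induction n with
  | zero => rfl
  | succ n ih =>
    rw [iteratedDeriv_succ, ih]
    exact funext fun s => (hasDerivAt_hurwitzTrunc hx n m s).deriv

lemma hurwitzTrunc_one (hx : 0 < x) (n m : ℕ) :
    hurwitzTrunc x n m 1 = (-1) ^ n *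
      (((∑ k ∈ Finset.range (m + 1), Real.log (k + x) ^ n / (k + x)) -
        Real.log (m + x) ^ (n + 1) / (n + 1) : ℝ) : ℂ) := by
  have hM : (0 : ℝ) < m + x := by positivity
  have hint : ∫ t in (1 : ℝ)..(m + x), iterDerivCpowNeg n t 1 =
      (-1) ^ n * ((Real.log (m + x) ^ (n + 1) / (n + 1) : ℝ) : ℂ) := by
    rw [intervalIntegral.integral_congr fun t _ => iterDerivCpowNeg.one t n,
      intervalIntegral.integral_const_mul, intervalIntegral.integral_ofReal,
      Real.integral_log_pow_div hM]
  rw [hurwitzTrunc, hint, Finset.sum_congr rfl fun k _ => iterDerivCpowNeg.one _ n,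
    ← Finset.mul_sum, ← mul_sub]
  push_cast
  rfl

lemma hurwitzTrunc_zero_succ (hx : 0 < x) (m : ℕ) (s : ℂ) :
    hurwitzTrunc x 0 (m + 1) s = hurwitzTrunc x 0 m s + cpowNegRightRuleError (m + x) s := by
  have hcast : ((m + 1 : ℕ) : ℝ) + x = (m + x) + 1 := by push_cast; ring
  have hint : ∀ a b : ℝ, 0 < a → 0 < b →
      IntervalIntegrable (fun t : ℝ => (t : ℂ) ^ (-s)) MeasureTheory.volume a b :=
    fun a b ha hb => intervalIntegral.intervalIntegrable_cpow (Or.inr fun h =>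
      (lt_min ha hb).not_ge h.1)
  simp only [hurwitzTrunc, iterDerivCpowNeg.zero, cpowNegRightRuleError]
  rw [Finset.sum_range_succ _ (m + 1), hcast, ← intervalIntegral.integral_add_adjacent_intervals
    (hint 1 (m + x) one_pos (by positivity))
    (hint (m + x) (m + x + 1) (by positivity) (by positivity))]
  ring

lemma hurwitzTrunc_zero_eq_add_sum (hx : 0 < x) (m : ℕ) (s : ℂ) :
    hurwitzTrunc x 0 m s =
      hurwitzTrunc x 0 0 s + ∑ k ∈ Finset.range m, cpowNegRightRuleError (k + x) s := by
  induction m with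
  | zero => simp
  | succ m ih => rw [hurwitzTrunc_zero_succ hx, ih, Finset.sum_range_succ, add_assoc]

lemma tendsto_hurwitzTrunc_zero (hx : 0 < x) {s : ℂ} (hs : 1 < s.re) :
    Tendsto (hurwitzTrunc x 0 · s) atTop
      (𝓝 ((∑' k : ℕ, ((k : ℂ) + x) ^ (-s)) - 1 / (s - 1))) := by
  have hs1 : s ≠ 1 := fun h => by simp [h] at hs
  have hsum : Tendsto (fun m : ℕ => ∑ k ∈ Finset.range (m + 1), ((k : ℂ) + x) ^ (-s))
      atTop (𝓝 (∑' k : ℕ, ((k : ℂ) + x) ^ (-s))) :=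
    (summable_natCast_add_cpow_neg hx hs).hasSum.tendsto_sum_nat.comp (tendsto_add_atTop_nat 1)
  have hpow : Tendsto (fun m : ℕ => (((m + x : ℝ)) : ℂ) ^ (1 - s)) atTop (𝓝 0) :=
    (tendsto_ofReal_cpow_atTop_zero (by simpa using hs)).comp
      (tendsto_atTop_add_const_right _ x tendsto_natCast_atTop_atTop)
  have hpole : (0 - 1) / (1 - s) = 1 / (s - 1) := by
    rw [← neg_div_neg_eq]
    ring
  rw [← hpole]
  refine (hsum.sub ((hpow.sub_const 1).div_const (1 - s))).congr fun m => ?_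
  simp only [hurwitzTrunc, iterDerivCpowNeg.zero,
    integral_one_ofReal_cpow_neg (show (0 : ℝ) < m + x by positivity) hs1]
  push_cast
  rfl

lemma tendstoUniformlyOn_hurwitzTrunc_zero (hx : 0 < x) {σ R : ℝ} (hσ : 0 < σ) :
    TendstoUniformlyOn (hurwitzTrunc x 0) (hurwitzTruncLimit x) atTop
      {s | σ ≤ s.re ∧ ‖s‖ ≤ R} := by
  have hu : Summable fun k : ℕ => R / ((k : ℝ) + x) ^ (σ + 1) := by
    refine ((Real.summable_one_div_nat_add_rpow x (σ + 1)).2 (by linarith)).mul_left R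
      |>.congr fun k => ?_
    rw [abs_of_pos (by positivity), mul_one_div]
  have hbound : ∀ᶠ k : ℕ in atTop, ∀ s ∈ {s : ℂ | σ ≤ s.re ∧ ‖s‖ ≤ R},
      ‖cpowNegRightRuleError (k + x) s‖ ≤ R / ((k : ℝ) + x) ^ (σ + 1) := by
    filter_upwards [eventually_ge_atTop 1] with k hk s ⟨hσs, hRs⟩
    have hkx : 1 ≤ (k : ℝ) + x := by
      have : (1 : ℝ) ≤ k := by exact_mod_cast hk
      linarith
    refine (norm_cpowNegRightRuleError_le (by positivity) (by linarith)).trans ?_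
    gcongr
    exact (norm_nonneg s).trans hRs
  have hsum := tendstoUniformlyOn_tsum_nat_eventually hu hbound
  refine (TendstoUniformlyOn.add (fun u hu => Eventually.of_forall fun _ _ _ =>
    refl_mem_uniformity hu) hsum).congr (Eventually.of_forall fun m s _ => ?_)
  exact (hurwitzTrunc_zero_eq_add_sum hx m s).symm

lemma tendstoLocallyUniformlyOn_hurwitzTrunc_zero (hx : 0 < x) :
    TendstoLocallyUniformlyOn (hurwitzTrunc x 0) (hurwitzTruncLimit x) atTop {s | 0 < s.re} := by
  refine tendstoLocallyUniformlyOn_of_forall_exists_nhds fun s₀ hs₀ => ?_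
  refine ⟨_, mem_nhdsWithin_of_mem_nhds ?_,
    tendstoUniformlyOn_hurwitzTrunc_zero hx (σ := s₀.re / 2) (R := ‖s₀‖ + 1) (half_pos hs₀)⟩
  have hre : ∀ᶠ s in 𝓝 s₀, s₀.re / 2 < s.re :=
    continuousAt_const.eventually_lt Complex.continuous_re.continuousAt (half_lt_self hs₀)
  have hnorm : ∀ᶠ s in 𝓝 s₀, ‖s‖ < ‖s₀‖ + 1 :=
    continuous_norm.continuousAt.eventually_lt continuousAt_const (lt_add_one _)
  exact hre.and hnorm |>.mono fun s hs => ⟨hs.1.le, hs.2.le⟩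

lemma differentiable_hurwitzTrunc (hx : 0 < x) (n m : ℕ) :
    Differentiable ℂ (hurwitzTrunc x n m) :=
  fun s => (hasDerivAt_hurwitzTrunc hx n m s).differentiableAt

lemma eqOn_hurwitzTruncLimit (hx : 0 < x) {F : ℂ → ℂ} (hF : Differentiable ℂ F)
    (hFeq : ∀ s : ℂ, 1 < s.re → F s = (∑' k : ℕ, ((k : ℂ) + x) ^ (-s)) - 1 / (s - 1)) :
    EqOn (hurwitzTruncLimit x) F {s | 0 < s.re} := by
  have hU : IsOpen {s : ℂ | 0 < s.re} := isOpen_lt continuous_const Complex.continuous_re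
  have hlim := tendstoLocallyUniformlyOn_hurwitzTrunc_zero hx
  refine ((hlim.differentiableOn (.of_forall fun m => (differentiable_hurwitzTrunc hx 0 m)
    |>.differentiableOn) hU).analyticOnNhd hU).eqOn_of_preconnected_of_eventuallyEq
    (hF.differentiableOn.analyticOnNhd hU) (convex_halfSpace_re_gt 0).isPreconnected
    (show (0 : ℝ) < (2 : ℂ).re by norm_num) ?_
  filter_upwards [continuousAt_const.eventually_lt Complex.continuous_re.continuousAt
    (show (1 : ℝ) < (2 : ℂ).re by norm_num)] with s hs
  rw [hFeq s hs]
  exact tendsto_nhds_unique (hlim.tendsto_at (show 0 < s.re from one_pos.trans hs))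
    (tendsto_hurwitzTrunc_zero hx hs)

end

theorem stieltjes_constant_limit_general (x : ℝ) (hx0 : 0 < x) (n : ℕ)
    (F : ℂ → ℂ) (hF : Differentiable ℂ F)
    (hFeq : ∀ s : ℂ, 1 < s.re →
      F s = (∑' k : ℕ, ((k : ℂ) + (x : ℂ)) ^ (-s)) - 1 / (s - 1)) :
    Filter.Tendsto (fun m : ℕ =>
        (((∑ k ∈ Finset.range (m + 1), (Real.log ((k : ℝ) + x)) ^ n / ((k : ℝ) + x)) -
          (Real.log ((m : ℝ) + x)) ^ (n + 1) / ((n : ℝ) + 1) : ℝ) : ℂ))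
      Filter.atTop (nhds ((-1 : ℂ) ^ n * iteratedDeriv n F 1)) := by
  have hU : IsOpen {s : ℂ | 0 < s.re} := isOpen_lt continuous_const Complex.continuous_re
  have hderiv := ((tendstoLocallyUniformlyOn_hurwitzTrunc_zero hx0).congr_right
    (eqOn_hurwitzTruncLimit hx0 hF hFeq)).iteratedDeriv
    (.of_forall fun m => (differentiable_hurwitzTrunc hx0 0 m).differentiableOn) hU n
  have hat_one := hderiv.tendsto_at (show (0 : ℝ) < (1 : ℂ).re by norm_num)
  simp only [iteratedDeriv_hurwitzTrunc hx0, hurwitzTrunc_one hx0] at hat_one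
  refine (hat_one.const_mul ((-1) ^ n)).congr fun m => ?_
  rw [← mul_assoc, ← mul_pow]
  simp

/-- Berndt's formula for the generalized Stieltjes constants: if `F` is the entire
continuation of `ζ(s,x) - 1/(s-1)`, so that `γ_n(x) = (-1)^n F⁽ⁿ⁾(1)` is the `n`-th
generalized Stieltjes constant from the Laurent expansion of `ζ(s,x)` at `s = 1`, then
`γ_n(x) = lim_{m→∞} (Σ_{k=0}^m log^n(k+x)/(k+x) - log^{n+1}(m+x)/(n+1))` for `0 < x ≤ 1`. -/
theorem stieltjes_constant_limit (x : ℝ) (hx0 : 0 < x) (hx1 : x ≤ 1) (n : ℕ)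
    (F : ℂ → ℂ) (hF : Differentiable ℂ F)
    (hFeq : ∀ s : ℂ, 1 < s.re →
      F s = (∑' k : ℕ, ((k : ℂ) + (x : ℂ)) ^ (-s)) - 1 / (s - 1)) :
    Filter.Tendsto (fun m : ℕ =>
        (((∑ k ∈ Finset.range (m + 1), (Real.log ((k : ℝ) + x)) ^ n / ((k : ℝ) + x)) -
          (Real.log ((m : ℝ) + x)) ^ (n + 1) / ((n : ℝ) + 1) : ℝ) : ℂ))
      Filter.atTop (nhds ((-1 : ℂ) ^ n * iteratedDeriv n F 1)) :=
  stieltjes_constant_limit_general x hx0 n F hF hFeq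
end
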